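/- Consider a finite stochastic game with states s = 1,…,N and let β ∈ (0,1). Let v(β) ∈ ℝ^N be the unique vector satisfying v_s(β) = val[R_β(s, v(β))] for all s, where R_β(s,u) := [(1−β) r(s,a,b) + β Σ_{s'} p(s'|s,a,b) u_{s'}]_{a,b}. If v_s(β) ≠ 0 for some state s, then the matrix game R_β(s, v(β)) has a square invertible submatrix R̄ such that v_s(β) = det(R̄) / (Σ_{i,j} R̄^{ij}), where R̄^{ij} denotes the (i,j)-th cofactor of R̄. -/

import Mathlib

open Matrix

/-- The payoff `xᵀ A y` of the zero-sum matrix game `A` under mixed strategies `x`, `y`. -/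
noncomputable def payoff {m n : ℕ} (A : Matrix (Fin m) (Fin n) ℝ)
    (x : Fin m → ℝ) (y : Fin n → ℝ) : ℝ := x ⬝ᵥ A.mulVec y

/-- The value `val(A) = max_{x ∈ Δ_m} min_{y ∈ Δ_n} xᵀ A y` of the matrix game `A`. -/
noncomputable def matrixVal {m n : ℕ} (A : Matrix (Fin m) (Fin n) ℝ) : ℝ :=
  ⨆ x : stdSimplex ℝ (Fin m), ⨅ y : stdSimplex ℝ (Fin n), payoff A x.1 y.1

/-- The auxiliary Shapley matrix game
`R_β(s,u) = [(1−β) r(s,a,b) + β Σ_{s'} p(s'|s,a,b) u_{s'}]_{a,b}`. -/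
noncomputable def shapleyMatrix {N : ℕ} {m n : Fin N → ℕ}
    (r : (s : Fin N) → Fin (m s) → Fin (n s) → ℝ)
    (p : (s : Fin N) → Fin (m s) → Fin (n s) → Fin N → ℝ)
    (β : ℝ) (s : Fin N) (u : Fin N → ℝ) : Matrix (Fin (m s)) (Fin (n s)) ℝ :=
  Matrix.of fun a b => (1 - β) * r s a b + β * ∑ s', p s a b s' * u s'

/-!
By Sion's minimax theorem the game `A = R_β(s, v(β))` has optimal strategies `x` and `y`, and its
value is `v = v_s(β)`. Suppose `v > 0`. Because of `y`, every `z ≥ 0` with `zA ≥ 1` has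
`∑ z ≥ 1/v`, and `x/v` attains this bound, so the minimisers form a nonempty compact face of the
polyhedron `{z ≥ 0, zA ≥ 1}`. At an extreme point `z` of this face, the rows of `A` in the support
of `z`, restricted to the columns where `(zA)_j = 1`, are linearly independent: otherwise `z` could
be moved both ways along a nonzero direction. Picking as many of these columns gives an invertible
square submatrix `B` with `z_B B = 1`; multiplying by `adj B` gives `det B · ∑ z = ∑_{ij} B^{ij}`,
that is `v = det B / ∑_{ij} B^{ij}`. For `v < 0` apply this to the game `-Aᵀ` of value `-v`.
-/

open Filter Topology

section StdSimplex

variable {ι : Type*} [Fintype ι]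

theorem dotProduct_le_of_mem_stdSimplex {x u : ι → ℝ} (hx : x ∈ stdSimplex ℝ ι) {c : ℝ}
    (hu : ∀ i, u i ≤ c) : x ⬝ᵥ u ≤ c :=
  calc x ⬝ᵥ u ≤ x ⬝ᵥ fun _ => c := dotProduct_le_dotProduct_of_nonneg_left hu hx.1
    _ = c := by simp [dotProduct, ← Finset.sum_mul, hx.2]

theorem le_dotProduct_of_mem_stdSimplex {x u : ι → ℝ} (hx : x ∈ stdSimplex ℝ ι) {c : ℝ}
    (hu : ∀ i, c ≤ u i) : c ≤ x ⬝ᵥ u := by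
  simpa using dotProduct_le_of_mem_stdSimplex hx (u := -u) (c := -c) fun i => neg_le_neg (hu i)

end StdSimplex

section MatrixGame

variable {m n : ℕ}

theorem matrixVal_eq_of_forall_le {A : Matrix (Fin m) (Fin n) ℝ} {x : Fin m → ℝ}
    (hx : x ∈ stdSimplex ℝ (Fin m)) {y : Fin n → ℝ} (hy : y ∈ stdSimplex ℝ (Fin n)) {c : ℝ}
    (hxA : ∀ j, c ≤ (x ᵥ* A) j) (hAy : ∀ i, (A *ᵥ y) i ≤ c) : matrixVal A = c := by
  have hle (x' : stdSimplex ℝ (Fin m)) : ⨅ y' : stdSimplex ℝ (Fin n), payoff A x' y' ≤ c := by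
    have hbdd : BddBelow (Set.range fun y' : stdSimplex ℝ (Fin n) => payoff A x' y') := by
      have := (isCompact_stdSimplex ℝ (Fin n)).bddBelow_image
        (f := fun y' => payoff A x' y') (by unfold payoff; fun_prop)
      rwa [Set.image_eq_range] at this
    exact (ciInf_le hbdd ⟨y, hy⟩).trans (dotProduct_le_of_mem_stdSimplex x'.2 hAy)
  have : Nonempty (stdSimplex ℝ (Fin m)) := ⟨⟨x, hx⟩⟩
  have : Nonempty (stdSimplex ℝ (Fin n)) := ⟨⟨y, hy⟩⟩
  refine le_antisymm (ciSup_le hle) (le_ciSup_of_le ⟨c, Set.forall_mem_range.2 hle⟩ ⟨x, hx⟩ ?_)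
  refine le_ciInf fun y' => ?_
  rw [payoff, dotProduct_mulVec, dotProduct_comm]
  exact le_dotProduct_of_mem_stdSimplex y'.2 hxA

theorem exists_optimal_strategies (hm : 0 < m) (hn : 0 < n) (A : Matrix (Fin m) (Fin n) ℝ) :
    ∃ x ∈ stdSimplex ℝ (Fin m), ∃ y ∈ stdSimplex ℝ (Fin n),
      (∀ j, matrixVal A ≤ (x ᵥ* A) j) ∧ ∀ i, (A *ᵥ y) i ≤ matrixVal A := by
  have hΔm : (stdSimplex ℝ (Fin m)).Nonempty := ⟨_, single_mem_stdSimplex ℝ ⟨0, hm⟩⟩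
  have hΔn : (stdSimplex ℝ (Fin n)).Nonempty := ⟨_, single_mem_stdSimplex ℝ ⟨0, hn⟩⟩
  have hcont_x (y : Fin n → ℝ) : Continuous fun x => payoff A x y := by unfold payoff; fun_prop
  have hcont_y (x : Fin m → ℝ) : Continuous fun y => payoff A x y := by unfold payoff; fun_prop
  obtain ⟨y, hy, x, hx, hsaddle⟩ := Sion.exists_isSaddlePointOn (f := fun y x => payoff A x y)
    hΔn (convex_stdSimplex ℝ _) (isCompact_stdSimplex ℝ _)
    (fun x _ => (hcont_y x).lowerSemicontinuous.lowerSemicontinuousOn _)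
    (fun x _ => ((dotProductBilin ℝ ℝ x ∘ₗ A.mulVecLin).convexOn
      (convex_stdSimplex ℝ _)).quasiconvexOn)
    (convex_stdSimplex ℝ _) hΔm (isCompact_stdSimplex ℝ _)
    (fun y _ => (hcont_x y).upperSemicontinuous.upperSemicontinuousOn _)
    (fun y _ => (((dotProductBilin ℝ ℝ).flip (A *ᵥ y)).concaveOn
      (convex_stdSimplex ℝ _)).quasiconcaveOn)
  have hxA (j : Fin n) : payoff A x y ≤ (x ᵥ* A) j := by
    simpa only [payoff, dotProduct_mulVec, dotProduct_single_one]
      using hsaddle _ (single_mem_stdSimplex ℝ j) x hx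
  have hAy (i : Fin m) : (A *ᵥ y) i ≤ payoff A x y := by
    simpa [payoff] using hsaddle y hy _ (single_mem_stdSimplex ℝ i)
  rw [matrixVal_eq_of_forall_le hx hy hxA hAy]
  exact ⟨x, hx, y, hy, hxA, hAy⟩

end MatrixGame

namespace Matrix

theorem exists_injective_isUnit_det_submatrix {K ι κ : Type*} [Field K] [Fintype ι]
    [DecidableEq ι] [Fintype κ] (M : Matrix ι κ K) (h : LinearIndependent K M.row) :
    ∃ τ : ι → κ, Function.Injective τ ∧ IsUnit (M.submatrix id τ).det := by
  obtain ⟨κ', a, ha, hspan, hli⟩ := exists_linearIndependent' K M.col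
  have : Fintype κ' := @Fintype.ofFinite _ hli.finite
  have hcard : Fintype.card κ' = Fintype.card ι := by
    rw [linearIndependent_iff_card_eq_finrank_span.1 hli, Set.finrank, hspan,
      ← rank_eq_finrank_span_cols, h.rank_matrix]
  let e : ι ≃ κ' := (Fintype.equivOfCardEq hcard).symm
  refine ⟨a ∘ e, ha.comp e.injective, ?_⟩
  rw [← isUnit_iff_isUnit_det, ← linearIndependent_cols_iff_isUnit]
  exact hli.comp e e.injective

variable {n K : Type*} [Fintype n] [DecidableEq n]

theorem det_mul_sum_eq_sum_adjugate {R : Type*} [CommRing R] (B : Matrix n n R) {w : n → R}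
    (hw : w ᵥ* B = 1) : B.det * ∑ i, w i = ∑ i, ∑ j, B.adjugate j i := by
  have h : B.det • w = 1 ᵥ* B.adjugate := by
    rw [← hw, vecMul_vecMul, mul_adjugate, vecMul_smul, vecMul_one]
  simp_rw [Finset.mul_sum, ← smul_eq_mul, ← Pi.smul_apply, h]
  simp [vecMul, dotProduct]

theorem eq_det_div_sum_adjugate [Field K] {B : Matrix n n K} (hB : IsUnit B.det) {w : n → K}
    (hw : w ᵥ* B = 1) {v : K} (hsum : ∑ i, w i = v⁻¹) :
    v = B.det / ∑ i, ∑ j, B.adjugate j i := by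
  rw [← B.det_mul_sum_eq_sum_adjugate hw, hsum, div_mul_cancel_left₀ hB.ne_zero, inv_inv]

end Matrix

theorem Fintype.sum_subtype_ne_zero_eq_sum {ι M N : Type*} [Fintype ι] [AddCommMonoid M]
    [Zero N] [DecidableEq N] (z : ι → N) (f : ι → M) (hf : ∀ i, z i = 0 → f i = 0) :
    ∑ i : {i // z i ≠ 0}, f i = ∑ i, f i := by
  rw [← Fintype.sum_subtype_add_sum_subtype (fun i => z i ≠ 0) f,
    Fintype.sum_eq_zero (fun i : {i // ¬z i ≠ 0} => f i) fun i => hf i (not_not.1 i.2), add_zero]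

theorem eventually_le_add_mul {a p q : ℝ} (hp : a ≤ p) (hq : p = a → q = 0) :
    ∀ᶠ t in 𝓝 (0 : ℝ), a ≤ p + t * q := by
  rcases hp.eq_or_lt with rfl | hlt
  · simp [hq rfl]
  · have hcont : Continuous fun t : ℝ => p + t * q := by fun_prop
    exact ((hcont.tendsto' 0 p (by simp)).eventually_const_lt hlt).mono fun _ => le_of_lt

section Convex

variable {E : Type*} [AddCommGroup E] [Module ℝ E] {A : Set E}

theorem eq_zero_of_mem_extremePoints_of_eventually_add_smul_mem {z w : E}
    (hz : z ∈ A.extremePoints ℝ) (hw : ∀ᶠ t in 𝓝 (0 : ℝ), z + t • w ∈ A) : w = 0 := by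
  have hw' : ∀ᶠ t in 𝓝[>] (0 : ℝ), 0 < t ∧ z + t • w ∈ A ∧ z + (-t) • w ∈ A :=
    eventually_mem_nhdsWithin.and <| eventually_nhdsWithin_of_eventually_nhds <|
      hw.and ((continuous_neg.tendsto' 0 0 neg_zero).eventually hw)
  obtain ⟨ε, hε, h₁, h₂⟩ := hw'.exists
  have hseg : z ∈ openSegment ℝ (z + ε • w) (z + (-ε) • w) :=
    ⟨1 / 2, 1 / 2, by norm_num, by norm_num, by norm_num, by module⟩
  simpa [hε.ne'] using hz.2 h₁ h₂ hseg

theorem isExtreme_sep_le_of_forall_le (f : E →ₗ[ℝ] ℝ) {c : ℝ} (hf : ∀ x ∈ A, c ≤ f x) :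
    IsExtreme ℝ A {x ∈ A | f x ≤ c} := by
  refine ⟨Set.sep_subset _ _, fun x₁ hx₁ x₂ hx₂ z ⟨_, hz⟩ ⟨a, b, ha, hb, hab, hzab⟩ => ⟨hx₁, ?_⟩⟩
  subst hzab
  simp only [map_add, map_smul, smul_eq_mul] at hz
  have hc : a * c + b * c = c := by rw [← add_mul, hab, one_mul]
  by_contra! h
  nlinarith [mul_pos ha (sub_pos.2 h), mul_nonneg hb.le (sub_nonneg.2 (hf x₂ hx₂))]

end Convex

def Matrix.HasShapleySnowKernel {ι κ : Type*} (A : Matrix ι κ ℝ) (v : ℝ) : Prop :=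
  ∃ (k : ℕ) (_ : 0 < k) (ρ : Fin k → ι) (σ : Fin k → κ),
    Function.Injective ρ ∧ Function.Injective σ ∧ IsUnit (A.submatrix ρ σ).det ∧
    v = (A.submatrix ρ σ).det / ∑ i, ∑ j, (A.submatrix ρ σ).adjugate j i

namespace Matrix.HasShapleySnowKernel

variable {ι κ : Type*} {A : Matrix ι κ ℝ} {v : ℝ}

theorem of_injective {ι' : Type*} [Fintype ι'] [DecidableEq ι'] [Nonempty ι']
    {ρ : ι' → ι} {σ : ι' → κ} (hρ : Function.Injective ρ) (hσ : Function.Injective σ)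
    (hdet : IsUnit (A.submatrix ρ σ).det)
    (hv : v = (A.submatrix ρ σ).det / ∑ i, ∑ j, (A.submatrix ρ σ).adjugate j i) :
    A.HasShapleySnowKernel v := by
  let e := (Fintype.equivFin ι').symm
  have hB : A.submatrix (ρ ∘ e) (σ ∘ e) = (A.submatrix ρ σ).submatrix e e := rfl
  refine ⟨Fintype.card ι', Fintype.card_pos, ρ ∘ e, σ ∘ e, hρ.comp e.injective,
    hσ.comp e.injective, ?_⟩
  rw [hB, det_submatrix_equiv_self, adjugate_submatrix_equiv_self]
  refine ⟨hdet, hv.trans ?_⟩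
  congr 1
  exact Fintype.sum_equiv e.symm _ _ fun i => Fintype.sum_equiv e.symm _ _ fun j => by simp

theorem of_neg_transpose (h : (-Aᵀ).HasShapleySnowKernel (-v)) : A.HasShapleySnowKernel v := by
  obtain ⟨k, hk, ρ, σ, hρ, hσ, hdet, hv⟩ := h
  have hB : (-Aᵀ).submatrix ρ σ = (-1 : ℝ) • (A.submatrix σ ρ)ᵀ := by ext; simp
  obtain ⟨k, rfl⟩ := Nat.exists_eq_succ_of_ne_zero hk.ne'
  rw [hB, det_smul, det_transpose, Fintype.card_fin] at hdet hv
  rw [adjugate_smul, ← adjugate_transpose] at hv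
  refine ⟨k + 1, hk, σ, ρ, hσ, hρ, (IsUnit.mul_iff.1 hdet).2, ?_⟩
  simp only [Fintype.card_fin, smul_apply, transpose_apply, smul_eq_mul, ← Finset.mul_sum,
    pow_succ, Nat.succ_sub_one] at hv
  have hS : ∑ i, ∑ j, (A.submatrix σ ρ).adjugate i j = ∑ i, ∑ j, (A.submatrix σ ρ).adjugate j i :=
    Finset.sum_comm
  rwa [hS, mul_assoc, mul_div_mul_left _ _ (pow_ne_zero _ (by norm_num)), neg_one_mul, neg_div,
    neg_inj] at hv

end Matrix.HasShapleySnowKernel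

namespace ShapleySnow

variable {ι κ : Type*} [Fintype ι]

def feasibleSet {κ : Type*} (A : Matrix ι κ ℝ) : Set (ι → ℝ) := {z | 0 ≤ z ∧ 1 ≤ z ᵥ* A}

variable {A : Matrix ι κ ℝ}

theorem isClosed_feasibleSet : IsClosed (feasibleSet A) :=
  (isClosed_le continuous_const continuous_id).inter
    (isClosed_le continuous_const (by fun_prop : Continuous fun z : ι → ℝ => z ᵥ* A))

variable [Fintype κ]

theorem inv_le_sum_of_mem_feasibleSet {v : ℝ} (hv : 0 < v) {y : κ → ℝ}
    (hy : y ∈ stdSimplex ℝ κ) (hAy : ∀ i, (A *ᵥ y) i ≤ v) {z : ι → ℝ}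
    (hz : z ∈ feasibleSet A) : v⁻¹ ≤ ∑ i, z i := by
  have h : 1 ≤ v * ∑ i, z i := calc
    1 ≤ y ⬝ᵥ (z ᵥ* A) := le_dotProduct_of_mem_stdSimplex hy hz.2
    _ = z ⬝ᵥ (A *ᵥ y) := by rw [dotProduct_comm, dotProduct_mulVec]
    _ ≤ z ⬝ᵥ fun _ => v := dotProduct_le_dotProduct_of_nonneg_left hAy hz.1
    _ = v * ∑ i, z i := by simp [dotProduct, Finset.mul_sum, mul_comm]
  rwa [inv_le_iff_one_le_mul₀' hv]

theorem linearIndependent_of_mem_extremePoints {z : ι → ℝ}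
    (hz : z ∈ (feasibleSet A).extremePoints ℝ) :
    LinearIndependent ℝ (A.submatrix (Subtype.val : {i // z i ≠ 0} → ι)
      (Subtype.val : {j // (z ᵥ* A) j = 1} → κ)).row := by
  rw [Fintype.linearIndependent_iff]
  intro c hc
  let w : ι → ℝ := fun i => if h : z i ≠ 0 then c ⟨i, h⟩ else 0
  have hw_supp (i : ι) (hi : z i = 0) : w i = 0 := by simp [w, hi]
  have hwA (j : κ) (hj : (z ᵥ* A) j = 1) : (w ᵥ* A) j = 0 := by
    have hcj := congrFun hc ⟨j, hj⟩
    simp only [Finset.sum_apply, Pi.smul_apply, row, submatrix_apply, smul_eq_mul,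
      Pi.zero_apply] at hcj
    rw [vecMul, dotProduct,
      ← Fintype.sum_subtype_ne_zero_eq_sum z _ fun i hi => by simp [hw_supp i hi]]
    refine (Finset.sum_congr rfl fun i _ => ?_).trans hcj
    simp [w, i.2]
  have hperturb : ∀ᶠ t in 𝓝 (0 : ℝ), z + t • w ∈ feasibleSet A := by
    have hrow (i : ι) : ∀ᶠ t in 𝓝 (0 : ℝ), 0 ≤ (z + t • w) i := by
      simpa using eventually_le_add_mul (hz.1.1 i) (hw_supp i)
    have hcol (j : κ) : ∀ᶠ t in 𝓝 (0 : ℝ), 1 ≤ ((z + t • w) ᵥ* A) j := by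
      simpa [add_vecMul, smul_vecMul] using eventually_le_add_mul (hz.1.2 j) (hwA j)
    filter_upwards [eventually_all.2 hrow, eventually_all.2 hcol] with t h₁ h₂ using ⟨h₁, h₂⟩
  have hw := eq_zero_of_mem_extremePoints_of_eventually_add_smul_mem hz hperturb
  intro i
  simpa [w, i.2] using congrFun hw i

theorem exists_mem_extremePoints_sum_eq_inv {v : ℝ} (hv : 0 < v) {x : ι → ℝ}
    (hx : x ∈ stdSimplex ℝ ι) (hxA : ∀ j, v ≤ (x ᵥ* A) j) {y : κ → ℝ}
    (hy : y ∈ stdSimplex ℝ κ) (hAy : ∀ i, (A *ᵥ y) i ≤ v) :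
    ∃ z ∈ (feasibleSet A).extremePoints ℝ, ∑ i, z i = v⁻¹ := by
  let mass : (ι → ℝ) →ₗ[ℝ] ℝ := ∑ i, LinearMap.proj i
  have hmass (z : ι → ℝ) : mass z = ∑ i, z i := by simp [mass]
  let G := {z ∈ feasibleSet A | mass z ≤ v⁻¹}
  have hlow (z : ι → ℝ) (hz : z ∈ feasibleSet A) : v⁻¹ ≤ mass z :=
    (hmass z).symm ▸ inv_le_sum_of_mem_feasibleSet hv hy hAy hz
  have hG_extreme : IsExtreme ℝ (feasibleSet A) G := isExtreme_sep_le_of_forall_le mass hlow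
  have hxG : v⁻¹ • x ∈ G := by
    refine ⟨⟨smul_nonneg (inv_nonneg.2 hv.le) hx.1, fun j => ?_⟩, ?_⟩
    · simpa [smul_vecMul, ← div_eq_inv_mul, one_le_div hv] using hxA j
    · simp [hmass, ← Finset.mul_sum, hx.2]
  have hG_compact : IsCompact G := by
    refine isCompact_Icc.of_isClosed_subset (isClosed_feasibleSet.inter
      (isClosed_le mass.continuous_of_finiteDimensional continuous_const))
      (fun z hz => ⟨hz.1.1, fun i => ?_⟩ : G ⊆ Set.Icc 0 fun _ => v⁻¹)
    calc z i ≤ ∑ i, z i := Finset.single_le_sum (fun i _ => hz.1.1 i) (Finset.mem_univ i)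
      _ ≤ v⁻¹ := hmass z ▸ hz.2
  obtain ⟨z, hz⟩ := hG_compact.extremePoints_nonempty ⟨_, hxG⟩
  exact ⟨z, hG_extreme.extremePoints_subset_extremePoints hz,
    hmass z ▸ le_antisymm hz.1.2 (hlow z hz.1.1)⟩

theorem hasShapleySnowKernel_of_pos {v : ℝ} (hv : 0 < v) {x : ι → ℝ} (hx : x ∈ stdSimplex ℝ ι)
    (hxA : ∀ j, v ≤ (x ᵥ* A) j) {y : κ → ℝ} (hy : y ∈ stdSimplex ℝ κ)
    (hAy : ∀ i, (A *ᵥ y) i ≤ v) : A.HasShapleySnowKernel v := by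
  classical
  obtain ⟨z, hz, hz_sum⟩ := exists_mem_extremePoints_sum_eq_inv hv hx hxA hy hAy
  obtain ⟨τ, hτ, hdet⟩ := exists_injective_isUnit_det_submatrix _
    (linearIndependent_of_mem_extremePoints hz)
  have : Nonempty {i // z i ≠ 0} := by
    obtain ⟨i, -, hi⟩ := Finset.exists_ne_zero_of_sum_ne_zero (hz_sum ▸ inv_ne_zero hv.ne')
    exact ⟨⟨i, hi⟩⟩
  refine .of_injective Subtype.val_injective (Subtype.val_injective.comp hτ) hdet
    (eq_det_div_sum_adjugate hdet (w := fun i => z i) ?_ ?_)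
  · funext b
    refine Eq.trans ?_ (τ b).2
    rw [vecMul, dotProduct, vecMul, dotProduct,
      ← Fintype.sum_subtype_ne_zero_eq_sum z _ fun i hi => by simp [hi]]
    rfl
  · rwa [Fintype.sum_subtype_ne_zero_eq_sum z z fun _ => id]

theorem hasShapleySnowKernel_of_optimal {v : ℝ} (hv : v ≠ 0) {x : ι → ℝ}
    (hx : x ∈ stdSimplex ℝ ι) (hxA : ∀ j, v ≤ (x ᵥ* A) j) {y : κ → ℝ}
    (hy : y ∈ stdSimplex ℝ κ) (hAy : ∀ i, (A *ᵥ y) i ≤ v) : A.HasShapleySnowKernel v := by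
  rcases hv.lt_or_gt with hneg | hpos
  · refine .of_neg_transpose <|
      hasShapleySnowKernel_of_pos (neg_pos.2 hneg) hy (fun i => ?_) hx fun j => ?_
    · simpa [vecMul_neg, vecMul_transpose] using hAy i
    · simpa [neg_mulVec, mulVec_transpose] using hxA j
  · exact hasShapleySnowKernel_of_pos hpos hx hxA hy hAy

end ShapleySnow

theorem discounted_value_kernel_representation_general {N : ℕ} (m n : Fin N → ℕ)
    (hm : ∀ s, 0 < m s) (hn : ∀ s, 0 < n s)
    (r : (s : Fin N) → Fin (m s) → Fin (n s) → ℝ)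
    (p : (s : Fin N) → Fin (m s) → Fin (n s) → Fin N → ℝ)
    (β : ℝ)
    (v : Fin N → ℝ) (hv : ∀ s, v s = matrixVal (shapleyMatrix r p β s v))
    (s : Fin N) (hs : v s ≠ 0) :
    ∃ (k : ℕ) (_ : 0 < k) (ρ : Fin k → Fin (m s)) (σ : Fin k → Fin (n s)),
      Function.Injective ρ ∧ Function.Injective σ ∧
      IsUnit ((shapleyMatrix r p β s v).submatrix ρ σ).det ∧
      v s = ((shapleyMatrix r p β s v).submatrix ρ σ).det /
        (∑ i, ∑ j, ((shapleyMatrix r p β s v).submatrix ρ σ).adjugate j i) := by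
  obtain ⟨x, hx, y, hy, hxA, hAy⟩ :=
    exists_optimal_strategies (hm s) (hn s) (shapleyMatrix r p β s v)
  rw [← hv s] at hxA hAy
  exact ShapleySnow.hasShapleySnowKernel_of_optimal hs hx hxA hy hAy

/-- Reduction of Shapley's fixed-point equation to a Shapley–Snow kernel: if the
value `v_s(β)` of state `s` is nonzero, then the auxiliary game `R_β(s, v(β))` has a
square invertible submatrix `R̄` with `v_s(β) = det(R̄)/Σ_{ij} R̄^{ij}`, where the
`(i,j)`-th cofactor `R̄^{ij}` equals `adjugate R̄ j i`. -/
theorem discounted_value_kernel_representation {N : ℕ} (hN : 0 < N) (m n : Fin N → ℕ)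
    (hm : ∀ s, 0 < m s) (hn : ∀ s, 0 < n s)
    (r : (s : Fin N) → Fin (m s) → Fin (n s) → ℝ)
    (p : (s : Fin N) → Fin (m s) → Fin (n s) → Fin N → ℝ)
    (hp : ∀ s a b s', 0 ≤ p s a b s') (hp1 : ∀ s a b, ∑ s', p s a b s' = 1)
    (β : ℝ) (hβ : β ∈ Set.Ioo (0 : ℝ) 1)
    (v : Fin N → ℝ) (hv : ∀ s, v s = matrixVal (shapleyMatrix r p β s v))
    (s : Fin N) (hs : v s ≠ 0) :
    ∃ (k : ℕ) (_ : 0 < k) (ρ : Fin k → Fin (m s)) (σ : Fin k → Fin (n s)),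
      Function.Injective ρ ∧ Function.Injective σ ∧
      IsUnit ((shapleyMatrix r p β s v).submatrix ρ σ).det ∧
      v s = ((shapleyMatrix r p β s v).submatrix ρ σ).det /
        (∑ i, ∑ j, ((shapleyMatrix r p β s v).submatrix ρ σ).adjugate j i) :=
  discounted_value_kernel_representation_general m n hm hn r p β v hv s hs
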